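/- arXiv:2505.17600 — 4 statements merged into one kernel-verified Lean document; each statement's English description precedes it below -/
import Mathlib

section
/- Let X be a real Banach space with dim X ≥ 2 and let κ, τ > 0. Then √(κ² + τ²) ≤ T₁(κ,τ,X) ≤ κ + τ. -/
/-! Inside a two-dimensional subspace take unit vectors `x, y` maximising `|Ω x y|` for a nonzero
alternating form `Ω = f ∧ g`; by homogeneity `|Ω u w| ≤ |Ω x y| ‖u‖ ‖w‖` for all `u, w`. Since
`Ω (κx + τy) (κy − τx) = (κ² + τ²) Ω x y`, this gives `κ² + τ² ≤ ‖κx + τy‖ ‖κy − τx‖`, and with `−τ`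
in place of `τ` also `κ² + τ² ≤ ‖κx − τy‖ ‖κy + τx‖`. Multiplying, the product of
`‖κx + τy‖ ‖κx − τy‖` and `‖κy + τx‖ ‖κy − τx‖` is at least `(κ² + τ²)²`, so one of the pairs
`(x, y)`, `(y, x)` attains the lower bound. The upper bound is the triangle inequality. -/

/-- The constant `T₁(κ,τ,X) = sup{ (‖κx + τy‖ ‖κx − τy‖)^{1/2} : x, y ∈ S(X) }`. -/
noncomputable def T1 (X : Type*) [NormedAddCommGroup X] [NormedSpace ℝ X] (κ τ : ℝ) : ℝ :=
  sSup {r : ℝ | ∃ x y : X, ‖x‖ = 1 ∧ ‖y‖ = 1 ∧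
    r = Real.sqrt (‖κ • x + τ • y‖ * ‖κ • x - τ • y‖)}

section Wedge

variable {V : Type*} [NormedAddCommGroup V] [NormedSpace ℝ V] (f g : V →L[ℝ] ℝ)

def wedge (u w : V) : ℝ := f u * g w - g u * f w

lemma wedge_smul_smul (a b : ℝ) (u w : V) :
    wedge f g (a • u) (b • w) = a * b * wedge f g u w := by
  simp only [wedge, map_smul, smul_eq_mul]
  ring

lemma wedge_add_sub (κ τ : ℝ) (x y : V) :
    wedge f g (κ • x + τ • y) (κ • y - τ • x) = (κ ^ 2 + τ ^ 2) * wedge f g x y := by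
  simp only [wedge, map_add, map_sub, map_smul, smul_eq_mul]
  ring

lemma continuous_wedge : Continuous fun p : V × V => wedge f g p.1 p.2 := by
  unfold wedge
  fun_prop

variable {f g}

lemma abs_wedge_le_of_forall_norm_eq_one {C : ℝ}
    (h : ∀ u w : V, ‖u‖ = 1 → ‖w‖ = 1 → |wedge f g u w| ≤ C) (u w : V) :
    |wedge f g u w| ≤ C * (‖u‖ * ‖w‖) := by
  rcases eq_or_ne u 0 with rfl | hu
  · simp [wedge]
  rcases eq_or_ne w 0 with rfl | hw
  · simp [wedge]
  have hu' : 0 < ‖u‖ := norm_pos_iff.mpr hu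
  have hw' : 0 < ‖w‖ := norm_pos_iff.mpr hw
  calc |wedge f g u w|
      = ‖u‖ * ‖w‖ * |wedge f g (‖u‖⁻¹ • u) (‖w‖⁻¹ • w)| := by
        rw [wedge_smul_smul, abs_mul, abs_of_pos (a := ‖u‖⁻¹ * ‖w‖⁻¹) (by positivity)]
        field_simp
    _ ≤ ‖u‖ * ‖w‖ * C := by
        gcongr
        exact h _ _ (norm_smul_inv_norm (𝕜 := ℝ) hu) (norm_smul_inv_norm (𝕜 := ℝ) hw)
    _ = C * (‖u‖ * ‖w‖) := mul_comm _ _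

lemma exists_max_abs_wedge [FiniteDimensional ℝ V] {u₀ w₀ : V} (h₀ : wedge f g u₀ w₀ ≠ 0) :
    ∃ x y : V, ‖x‖ = 1 ∧ ‖y‖ = 1 ∧ wedge f g x y ≠ 0 ∧
      ∀ u w : V, |wedge f g u w| ≤ |wedge f g x y| * (‖u‖ * ‖w‖) := by
  have : Nontrivial V := nontrivial_of_ne u₀ 0 (by rintro rfl; simp [wedge] at h₀)
  have hne : (Metric.sphere (0 : V) 1).Nonempty := NormedSpace.sphere_nonempty.mpr zero_le_one
  obtain ⟨⟨x, y⟩, ⟨hx, hy⟩, hmax⟩ :=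
    ((isCompact_sphere 0 1).prod (isCompact_sphere 0 1)).exists_isMaxOn (hne.prod hne)
      (continuous_abs.comp (continuous_wedge f g)).continuousOn
  rw [mem_sphere_zero_iff_norm] at hx hy
  have hbound := abs_wedge_le_of_forall_norm_eq_one (C := |wedge f g x y|)
    (fun u w hu hw => hmax (Set.mk_mem_prod (mem_sphere_zero_iff_norm.mpr hu)
      (mem_sphere_zero_iff_norm.mpr hw)))
  refine ⟨x, y, hx, hy, fun hxy => h₀ ?_, hbound⟩
  simpa [hxy] using hbound u₀ w₀

lemma sq_add_sq_le_of_abs_wedge_le {x y : V}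
    (hmax : ∀ u w : V, |wedge f g u w| ≤ |wedge f g x y| * (‖u‖ * ‖w‖))
    (hxy : wedge f g x y ≠ 0) (κ τ : ℝ) :
    κ ^ 2 + τ ^ 2 ≤ ‖κ • x + τ • y‖ * ‖κ • y - τ • x‖ := by
  have h := hmax (κ • x + τ • y) (κ • y - τ • x)
  rw [wedge_add_sub, abs_mul, abs_of_nonneg (by positivity), mul_comm] at h
  exact le_of_mul_le_mul_left h (abs_pos.mpr hxy)

lemma exists_sq_add_sq_le_of_wedge_ne_zero [FiniteDimensional ℝ V] {u₀ w₀ : V}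
    (h₀ : wedge f g u₀ w₀ ≠ 0) (κ τ : ℝ) :
    ∃ x y : V, ‖x‖ = 1 ∧ ‖y‖ = 1 ∧ κ ^ 2 + τ ^ 2 ≤ ‖κ • x + τ • y‖ * ‖κ • x - τ • y‖ := by
  obtain ⟨x, y, hx, hy, hxy, hmax⟩ := exists_max_abs_wedge h₀
  have h₁ := sq_add_sq_le_of_abs_wedge_le hmax hxy κ τ
  have h₂ := sq_add_sq_le_of_abs_wedge_le hmax hxy κ (-τ)
  rw [neg_sq, neg_smul, ← sub_eq_add_neg, neg_smul, sub_neg_eq_add] at h₂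
  have : κ ^ 2 + τ ^ 2 ≤ ‖κ • x + τ • y‖ * ‖κ • x - τ • y‖ ∨
      κ ^ 2 + τ ^ 2 ≤ ‖κ • y + τ • x‖ * ‖κ • y - τ • x‖ := by
    by_contra! h
    have hle := mul_le_mul h₁ h₂ (by positivity) (by positivity)
    have hlt := mul_lt_mul'' h.1 h.2 (by positivity) (by positivity)
    linarith
  rcases this with h | h
  · exact ⟨x, y, hx, hy, h⟩
  · exact ⟨y, x, hy, hx, h⟩

end Wedge

lemma exists_sq_add_sq_le_norm_mul_norm {X : Type*} [NormedAddCommGroup X] [NormedSpace ℝ X]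
    (hdim : 2 ≤ Module.rank ℝ X) (κ τ : ℝ) :
    ∃ x y : X, ‖x‖ = 1 ∧ ‖y‖ = 1 ∧ κ ^ 2 + τ ^ 2 ≤ ‖κ • x + τ • y‖ * ‖κ • x - τ • y‖ := by
  obtain ⟨v, hv⟩ := exists_linearIndependent_of_le_rank (n := 2) (by exact_mod_cast hdim)
  let V := Submodule.span ℝ (Set.range v)
  let B : Module.Basis (Fin 2) ℝ V := .span hv
  have : FiniteDimensional ℝ V := .span_of_finite ℝ (Set.finite_range v)
  have h₀ : wedge (LinearMap.toContinuousLinearMap (B.coord 0))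
      (LinearMap.toContinuousLinearMap (B.coord 1)) (B 0) (B 1) ≠ 0 := by
    simp [wedge]
  obtain ⟨x, y, hx, hy, h⟩ := exists_sq_add_sq_le_of_wedge_ne_zero h₀ κ τ
  exact ⟨(x : X), (y : X), hx, hy, h⟩

section T1

variable {X : Type*} [NormedAddCommGroup X] [NormedSpace ℝ X] {κ τ : ℝ}

lemma sqrt_norm_add_mul_norm_sub_le (hκ : 0 ≤ κ) (hτ : 0 ≤ τ) {x y : X} (hx : ‖x‖ = 1)
    (hy : ‖y‖ = 1) : Real.sqrt (‖κ • x + τ • y‖ * ‖κ • x - τ • y‖) ≤ κ + τ := by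
  have hκx : ‖κ • x‖ ≤ κ := by rw [norm_smul_of_nonneg hκ, hx, mul_one]
  have hτy : ‖τ • y‖ ≤ τ := by rw [norm_smul_of_nonneg hτ, hy, mul_one]
  rw [Real.sqrt_le_left (by positivity), sq]
  exact mul_le_mul (norm_add_le_of_le hκx hτy) (norm_sub_le_of_le hκx hτy) (norm_nonneg _)
    (by positivity)

lemma T1_le_add (hκ : 0 ≤ κ) (hτ : 0 ≤ τ) : T1 X κ τ ≤ κ + τ := by
  refine Real.sSup_le ?_ (add_nonneg hκ hτ)
  rintro _ ⟨x, y, hx, hy, rfl⟩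
  exact sqrt_norm_add_mul_norm_sub_le hκ hτ hx hy

lemma sqrt_norm_add_mul_norm_sub_le_T1 (hκ : 0 ≤ κ) (hτ : 0 ≤ τ) {x y : X} (hx : ‖x‖ = 1)
    (hy : ‖y‖ = 1) : Real.sqrt (‖κ • x + τ • y‖ * ‖κ • x - τ • y‖) ≤ T1 X κ τ := by
  refine le_csSup ⟨κ + τ, ?_⟩ ⟨x, y, hx, hy, rfl⟩
  rintro _ ⟨x, y, hx, hy, rfl⟩
  exact sqrt_norm_add_mul_norm_sub_le hκ hτ hx hy

end T1

theorem stmt3_general {X : Type*} [NormedAddCommGroup X] [NormedSpace ℝ X]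
    (hdim : 2 ≤ Module.rank ℝ X) (κ τ : ℝ) (hκ : 0 < κ) (hτ : 0 < τ) :
    Real.sqrt (κ ^ 2 + τ ^ 2) ≤ T1 X κ τ ∧ T1 X κ τ ≤ κ + τ := by
  obtain ⟨x, y, hx, hy, h⟩ := exists_sq_add_sq_le_norm_mul_norm hdim κ τ
  exact ⟨(Real.sqrt_le_sqrt h).trans (sqrt_norm_add_mul_norm_sub_le_T1 hκ.le hτ.le hx hy),
    T1_le_add hκ.le hτ.le⟩

/-- For a real Banach space `X` with `dim X ≥ 2` and `κ, τ > 0`,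
`√(κ² + τ²) ≤ T₁(κ,τ,X) ≤ κ + τ`. -/
theorem stmt3 {X : Type*} [NormedAddCommGroup X] [NormedSpace ℝ X] [CompleteSpace X]
    (hdim : 2 ≤ Module.rank ℝ X) (κ τ : ℝ) (hκ : 0 < κ) (hτ : 0 < τ) :
    Real.sqrt (κ ^ 2 + τ ^ 2) ≤ T1 X κ τ ∧ T1 X κ τ ≤ κ + τ :=
  stmt3_general hdim κ τ hκ hτ
end

section
/- Let X be a real Banach space with dim X ≥ 2 and let κ, τ > 0. Then min(κ,τ) · T(X) ≤ T₁(κ,τ,X) ≤ max(κ,τ) · T(X). -/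
set_option maxHeartbeats 1000000


/-- The constant `T(X) = sup{ (‖x + y‖ ‖x − y‖)^{1/2} : x, y ∈ S(X) }`. -/
noncomputable def Tconst (X : Type*) [NormedAddCommGroup X] : ℝ :=
  sSup {r : ℝ | ∃ x y : X, ‖x‖ = 1 ∧ ‖y‖ = 1 ∧
    r = Real.sqrt (‖x + y‖ * ‖x - y‖)}

section Aux

variable {X : Type*} [NormedAddCommGroup X] [NormedSpace ℝ X]

private lemma bddAbove_T1set (κ τ : ℝ) :
    BddAbove {r : ℝ | ∃ x y : X, ‖x‖ = 1 ∧ ‖y‖ = 1 ∧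
      r = Real.sqrt (‖κ • x + τ • y‖ * ‖κ • x - τ • y‖)} := by
  refine ⟨|κ| + |τ|, ?_⟩
  rintro r ⟨x, y, hx, hy, rfl⟩
  have h1 : ‖κ • x + τ • y‖ ≤ |κ| + |τ| := by
    calc ‖κ • x + τ • y‖ ≤ ‖κ • x‖ + ‖τ • y‖ := norm_add_le _ _
      _ = |κ| + |τ| := by rw [norm_smul, norm_smul, hx, hy, Real.norm_eq_abs,
            Real.norm_eq_abs, mul_one, mul_one]
  have h2 : ‖κ • x - τ • y‖ ≤ |κ| + |τ| := by
    calc ‖κ • x - τ • y‖ ≤ ‖κ • x‖ + ‖τ • y‖ := norm_sub_le _ _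
      _ = |κ| + |τ| := by rw [norm_smul, norm_smul, hx, hy, Real.norm_eq_abs,
            Real.norm_eq_abs, mul_one, mul_one]
  have hab : (0:ℝ) ≤ |κ| + |τ| := by positivity
  calc Real.sqrt (‖κ • x + τ • y‖ * ‖κ • x - τ • y‖)
      ≤ Real.sqrt ((|κ| + |τ|) * (|κ| + |τ|)) :=
        Real.sqrt_le_sqrt (mul_le_mul h1 h2 (norm_nonneg _) hab)
    _ = |κ| + |τ| := Real.sqrt_mul_self hab

private lemma bddAbove_Tset :
    BddAbove {r : ℝ | ∃ x y : X, ‖x‖ = 1 ∧ ‖y‖ = 1 ∧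
      r = Real.sqrt (‖x + y‖ * ‖x - y‖)} := by
  refine ⟨2, ?_⟩
  rintro r ⟨x, y, hx, hy, rfl⟩
  have h1 : ‖x + y‖ ≤ 2 := by
    have := norm_add_le x y; rw [hx, hy] at this; linarith
  have h2 : ‖x - y‖ ≤ 2 := by
    have := norm_sub_le x y; rw [hx, hy] at this; linarith
  calc Real.sqrt (‖x + y‖ * ‖x - y‖) ≤ Real.sqrt (2 * 2) :=
        Real.sqrt_le_sqrt (mul_le_mul h1 h2 (norm_nonneg _) (by norm_num))
    _ = 2 := by rw [show (2:ℝ)*2 = 4 by norm_num]; rw [show (4:ℝ) = 2^2 by norm_num,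
          Real.sqrt_sq (by norm_num)]

private lemma le_T1 (κ τ : ℝ) {x y : X} (hx : ‖x‖ = 1) (hy : ‖y‖ = 1) :
    Real.sqrt (‖κ • x + τ • y‖ * ‖κ • x - τ • y‖) ≤ T1 X κ τ := by
  unfold T1
  exact le_csSup (bddAbove_T1set κ τ) ⟨x, y, hx, hy, rfl⟩

private lemma le_Tconst {x y : X} (hx : ‖x‖ = 1) (hy : ‖y‖ = 1) :
    Real.sqrt (‖x + y‖ * ‖x - y‖) ≤ Tconst X := by
  unfold Tconst
  exact le_csSup bddAbove_Tset ⟨x, y, hx, hy, rfl⟩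

private lemma mul_le_T1_sq (κ τ : ℝ) {x y : X} (hx : ‖x‖ = 1) (hy : ‖y‖ = 1) :
    ‖κ • x + τ • y‖ * ‖κ • x - τ • y‖ ≤ (T1 X κ τ) ^ 2 := by
  have h := le_T1 κ τ hx hy
  have hnn : (0:ℝ) ≤ ‖κ • x + τ • y‖ * ‖κ • x - τ • y‖ := by positivity
  nlinarith [Real.sq_sqrt hnn, Real.sqrt_nonneg (‖κ • x + τ • y‖ * ‖κ • x - τ • y‖)]

private lemma mul_le_Tconst_sq {x y : X} (hx : ‖x‖ = 1) (hy : ‖y‖ = 1) :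
    ‖x + y‖ * ‖x - y‖ ≤ (Tconst X) ^ 2 := by
  have h := le_Tconst hx hy
  have hnn : (0:ℝ) ≤ ‖x + y‖ * ‖x - y‖ := by positivity
  nlinarith [Real.sq_sqrt hnn, Real.sqrt_nonneg (‖x + y‖ * ‖x - y‖)]

/-- Existence of an "equalized" pair: unit `x, y` with `‖a•x+b•y‖ = ‖a•x−b•y‖`,
obtained by the intermediate value theorem on a curve in a two-dimensional subspace. -/
private lemma exists_equalized (hdim : 2 ≤ Module.rank ℝ X) {a b : ℝ}
    (ha : 0 < a) (hb : 0 < b) :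
    ∃ x y : X, ‖x‖ = 1 ∧ ‖y‖ = 1 ∧ ‖a • x + b • y‖ = ‖a • x - b • y‖ := by
  have h1 : (1 : Cardinal) < Module.rank ℝ X := lt_of_lt_of_le (by norm_num) hdim
  have h0 : (0 : Cardinal) < Module.rank ℝ X := lt_of_lt_of_le (by norm_num) hdim
  obtain ⟨u, hu⟩ := rank_pos_iff_exists_ne_zero.mp h0
  obtain ⟨v, huv⟩ := exists_linearIndependent_pair_of_one_lt_rank h1 hu
  have hind : ∀ s t : ℝ, s • u + t • v = 0 → s = 0 ∧ t = 0 :=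
    fun s t hst => LinearIndependent.pair_iff.mp huv s t hst
  set γ : ℝ → X := fun t => Real.cos (Real.pi * t) • u + Real.sin (Real.pi * t) • v with hγ
  have hγne : ∀ t, γ t ≠ 0 := by
    intro t h
    obtain ⟨hc, hs⟩ := hind _ _ h
    have h2 := Real.sin_sq_add_cos_sq (Real.pi * t)
    rw [hc, hs] at h2
    norm_num at h2
  have hγcont : Continuous γ := by
    apply Continuous.add
    · exact ((Real.continuous_cos.comp (continuous_const.mul continuous_id))).smul
        continuous_const
    · exact ((Real.continuous_sin.comp (continuous_const.mul continuous_id))).smul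
        continuous_const
  set g : ℝ → X := fun t => ‖γ t‖⁻¹ • γ t with hg
  have hg1 : ∀ t, ‖g t‖ = 1 := by
    intro t
    rw [hg]
    simp only [norm_smul, norm_inv, norm_norm]
    exact inv_mul_cancel₀ (norm_ne_zero_iff.mpr (hγne t))
  have hgcont : Continuous g := by
    exact (hγcont.norm.inv₀ (fun t => norm_ne_zero_iff.mpr (hγne t))).smul hγcont
  have hγ0 : γ 0 = u := by simp [hγ]
  have hγ1 : γ 1 = -u := by simp [hγ]
  have hg10 : g 1 = -(g 0) := by
    rw [hg]; simp only [hγ0, hγ1, norm_neg, smul_neg]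
  set f : ℝ → ℝ := fun t => ‖a • g 0 + b • g t‖ - ‖a • g 0 - b • g t‖ with hf
  have hfcont : Continuous f := by
    apply Continuous.sub
    · exact (continuous_const.add (hgcont.const_smul b)).norm
    · exact (continuous_const.sub (hgcont.const_smul b)).norm
  have n1 : ‖(a + b) • g 0‖ = a + b := by
    rw [norm_smul, hg1 0, mul_one, Real.norm_eq_abs, abs_of_pos (by linarith)]
  have n2 : ‖(a - b) • g 0‖ = |a - b| := by
    rw [norm_smul, hg1 0, mul_one, Real.norm_eq_abs]
  have hplus : a • g 0 + b • g 0 = (a + b) • g 0 := by module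
  have hminus : a • g 0 - b • g 0 = (a - b) • g 0 := by module
  have hplus' : a • g 0 + b • (-(g 0)) = (a - b) • g 0 := by module
  have hminus' : a • g 0 - b • (-(g 0)) = (a + b) • g 0 := by module
  have hf0 : f 0 = (a + b) - |a - b| := by
    show ‖a • g 0 + b • g 0‖ - ‖a • g 0 - b • g 0‖ = (a + b) - |a - b|
    rw [hplus, hminus, n1, n2]
  have hf1 : f 1 = |a - b| - (a + b) := by
    show ‖a • g 0 + b • g 1‖ - ‖a • g 0 - b • g 1‖ = |a - b| - (a + b)
    rw [hg10, hplus', hminus', n1, n2]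
  have habs : |a - b| ≤ a + b := by
    rw [abs_le]; constructor <;> linarith
  have h0mem : (0:ℝ) ∈ Set.Icc (f 1) (f 0) := by
    rw [hf0, hf1]; constructor <;> simp <;> linarith
  have := intermediate_value_Icc' (by norm_num : (0:ℝ) ≤ 1) hfcont.continuousOn h0mem
  obtain ⟨t, _, ht⟩ := this
  refine ⟨g 0, g t, hg1 0, hg1 t, ?_⟩
  have : ‖a • g 0 + b • g t‖ - ‖a • g 0 - b • g t‖ = 0 := ht
  linarith [this]


private lemma upper_pair {κ τ : ℝ} (hκ : 0 < κ) (hτ : 0 < τ) (hκτ : κ ≤ τ)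
    {T : ℝ} (hTsq2 : 2 ≤ T ^ 2)
    {x y : X} (hx : ‖x‖ = 1) (hy : ‖y‖ = 1) (hABT : ‖x + y‖ * ‖x - y‖ ≤ T ^ 2) :
    ‖κ • x + τ • y‖ * ‖κ • x - τ • y‖ ≤ (τ * T) ^ 2 := by
  have hA0 : 0 ≤ ‖x + y‖ := norm_nonneg _
  have hB0 : 0 ≤ ‖x - y‖ := norm_nonneg _
  have hA2 : ‖x + y‖ ≤ 2 := by
    have := norm_add_le x y; rw [hx, hy] at this; linarith
  have hB2 : ‖x - y‖ ≤ 2 := by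
    have := norm_sub_le x y; rw [hx, hy] at this; linarith
  have hidP : κ • x + τ • y = κ • (x + y) + (τ - κ) • y := by module
  have hidQ : κ • x - τ • y = κ • (x - y) - (τ - κ) • y := by module
  have hP : ‖κ • x + τ • y‖ ≤ κ * ‖x + y‖ + (τ - κ) := by
    rw [hidP]
    have h := norm_add_le (κ • (x + y)) ((τ - κ) • y)
    rw [norm_smul, norm_smul, hy, mul_one, Real.norm_eq_abs, Real.norm_eq_abs,
      abs_of_pos hκ, abs_of_nonneg (by linarith)] at h
    exact h
  have hQ : ‖κ • x - τ • y‖ ≤ κ * ‖x - y‖ + (τ - κ) := by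
    rw [hidQ]
    have h := norm_sub_le (κ • (x - y)) ((τ - κ) • y)
    rw [norm_smul, norm_smul, hy, mul_one, Real.norm_eq_abs, Real.norm_eq_abs,
      abs_of_pos hκ, abs_of_nonneg (by linarith)] at h
    exact h
  have h1 : ‖κ • x + τ • y‖ * ‖κ • x - τ • y‖
      ≤ (κ * ‖x + y‖ + (τ - κ)) * (κ * ‖x - y‖ + (τ - κ)) :=
    mul_le_mul hP hQ (norm_nonneg _) (add_nonneg (mul_nonneg hκ.le hA0) (by linarith))
  have h2 : (κ * ‖x + y‖ + (τ - κ)) * (κ * ‖x - y‖ + (τ - κ)) ≤ (τ * T) ^ 2 := by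
    nlinarith [mul_nonneg (mul_nonneg hκ.le (sub_nonneg.mpr hκτ))
        (by linarith : (0:ℝ) ≤ 4 - ‖x + y‖ - ‖x - y‖),
      mul_nonneg (mul_nonneg hκ.le (sub_nonneg.mpr hκτ))
        (by linarith : (0:ℝ) ≤ T ^ 2 - 2),
      mul_nonneg (mul_nonneg (sub_nonneg.mpr hκτ) (sub_nonneg.mpr hκτ))
        (by linarith : (0:ℝ) ≤ T ^ 2 - 1),
      mul_le_mul_of_nonneg_left hABT (mul_nonneg hκ.le hκ.le)]
  linarith

/-- Main inequality in the ordered case `κ ≤ τ`. -/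
private lemma key (hdim : 2 ≤ Module.rank ℝ X) {κ τ : ℝ} (hκ : 0 < κ) (hτ : 0 < τ)
    (hκτ : κ ≤ τ) :
    κ * Tconst X ≤ T1 X κ τ ∧ T1 X κ τ ≤ τ * Tconst X := by
  -- equalized pair for (κ, τ)
  obtain ⟨x₁, y₁, hx₁, hy₁, he⟩ := exists_equalized hdim hκ hτ
  set c : ℝ := ‖κ • x₁ + τ • y₁‖ with hc
  have hcτ : τ ≤ c := by
    have hid : (κ • x₁ + τ • y₁) - (κ • x₁ - τ • y₁) = (2*τ) • y₁ := by module
    have h2 : ‖(κ • x₁ + τ • y₁) - (κ • x₁ - τ • y₁)‖ ≤ c + c := by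
      calc ‖(κ • x₁ + τ • y₁) - (κ • x₁ - τ • y₁)‖
          ≤ ‖κ • x₁ + τ • y₁‖ + ‖κ • x₁ - τ • y₁‖ := norm_sub_le _ _
        _ = c + c := by rw [← hc, ← he]
    rw [hid, norm_smul, hy₁, Real.norm_eq_abs, mul_one, abs_of_pos (by linarith)] at h2
    linarith
  have hc0 : 0 < c := lt_of_lt_of_le hτ hcτ
  have hcT1 : c ≤ T1 X κ τ := by
    have := le_T1 κ τ hx₁ hy₁
    rwa [← he, ← hc, Real.sqrt_mul_self hc0.le] at this
  have hT1pos : 0 < T1 X κ τ := lt_of_lt_of_le hc0 hcT1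
  -- equalized pair for (1,1) and the estimate Tconst ^ 2 ≥ 2
  obtain ⟨x₀, y₀, hx₀, hy₀, he₀'⟩ := exists_equalized hdim one_pos one_pos (X := X)
  rw [one_smul, one_smul] at he₀'
  set c₀ : ℝ := ‖x₀ + y₀‖ with hc₀
  have hxx : ‖x₀ + x₀‖ = 2 := by
    have : x₀ + x₀ = (2:ℝ) • x₀ := by module
    rw [this, norm_smul, hx₀, Real.norm_eq_abs, mul_one, abs_of_pos two_pos]
  have hyy : ‖y₀ + y₀‖ = 2 := by
    have : y₀ + y₀ = (2:ℝ) • y₀ := by module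
    rw [this, norm_smul, hy₀, Real.norm_eq_abs, mul_one, abs_of_pos two_pos]
  have hc₀1 : 1 ≤ c₀ := by
    have hid : (x₀ + y₀) + (x₀ - y₀) = x₀ + x₀ := by module
    have h2 : ‖(x₀ + y₀) + (x₀ - y₀)‖ ≤ c₀ + c₀ := by
      calc ‖(x₀ + y₀) + (x₀ - y₀)‖ ≤ ‖x₀ + y₀‖ + ‖x₀ - y₀‖ := norm_add_le _ _
        _ = c₀ + c₀ := by rw [← hc₀, ← he₀']
    rw [hid, hxx] at h2
    linarith
  have hc₀0 : 0 < c₀ := lt_of_lt_of_le one_pos hc₀1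
  have hc₀T : c₀ ≤ Tconst X := by
    have := le_Tconst hx₀ hy₀
    rwa [← he₀', ← hc₀, Real.sqrt_mul_self hc₀0.le] at this
  have hdualT : 2 / c₀ ≤ Tconst X := by
    set u : X := c₀⁻¹ • (x₀ + y₀) with hu
    set v : X := c₀⁻¹ • (x₀ - y₀) with hv
    have hun : ‖u‖ = 1 := by
      rw [hu, norm_smul, Real.norm_eq_abs, abs_of_pos (by positivity),
        inv_mul_cancel₀ hc₀0.ne']
    have hvn : ‖v‖ = 1 := by
      rw [hv, norm_smul, ← he₀', Real.norm_eq_abs, abs_of_pos (by positivity),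
        inv_mul_cancel₀ hc₀0.ne']
    have huv1 : u + v = c₀⁻¹ • (x₀ + x₀) := by rw [hu, hv]; module
    have huv2 : u - v = c₀⁻¹ • (y₀ + y₀) := by rw [hu, hv]; module
    have h1 : ‖u + v‖ = 2 / c₀ := by
      rw [huv1, norm_smul, hxx, Real.norm_eq_abs, abs_of_pos (by positivity)]
      rw [div_eq_inv_mul]
    have h2 : ‖u - v‖ = 2 / c₀ := by
      rw [huv2, norm_smul, hyy, Real.norm_eq_abs, abs_of_pos (by positivity)]
      rw [div_eq_inv_mul]
    have := le_Tconst hun hvn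
    rwa [h1, h2, Real.sqrt_mul_self (by positivity)] at this
  have hT0 : 0 ≤ Tconst X := le_trans (by positivity) hdualT
  have hTsq2 : 2 ≤ (Tconst X) ^ 2 := by
    have h2c : 0 ≤ 2 / c₀ := by positivity
    nlinarith [mul_le_mul hc₀T hdualT h2c hT0, mul_div_cancel₀ (2:ℝ) hc₀0.ne']
  constructor
  · -- lower bound : κ * Tconst X ≤ T1 X κ τ
    -- Fact 4 : if τ ≤ 2κ then 2κ² ≤ T1²
    have hfact4 : τ ≤ 2*κ → 2*κ^2 ≤ (T1 X κ τ)^2 := by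
      intro h2κ
      set u : X := c⁻¹ • (κ • x₁ + τ • y₁) with hu
      set v : X := c⁻¹ • (κ • x₁ - τ • y₁) with hv
      have hun : ‖u‖ = 1 := by
        rw [hu, norm_smul, Real.norm_eq_abs, abs_of_pos (by positivity),
          inv_mul_cancel₀ hc0.ne']
      have hvn : ‖v‖ = 1 := by
        rw [hv, norm_smul, ← he, Real.norm_eq_abs, abs_of_pos (by positivity),
          inv_mul_cancel₀ hc0.ne']
      have hid1 : κ • u + τ • v = c⁻¹ • ((κ*(κ+τ)) • x₁ - (τ*(τ-κ)) • y₁) := by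
        rw [hu, hv]; module
      have hid2 : κ • u - τ • v = c⁻¹ • ((τ*(κ+τ)) • y₁ - (κ*(τ-κ)) • x₁) := by
        rw [hu, hv]; module
      have hP : (κ^2 + 2*κ*τ - τ^2)/c ≤ ‖κ • u + τ • v‖ := by
        rw [hid1, norm_smul, Real.norm_eq_abs, abs_of_pos (by positivity)]
        have hlb : κ*(κ+τ) - τ*(τ-κ) ≤ ‖(κ*(κ+τ)) • x₁ - (τ*(τ-κ)) • y₁‖ := by
          have h := norm_sub_norm_le ((κ*(κ+τ)) • x₁) ((τ*(τ-κ)) • y₁)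
          rw [norm_smul, norm_smul, hx₁, hy₁, mul_one, mul_one, Real.norm_eq_abs,
            Real.norm_eq_abs, abs_of_pos (by positivity),
            abs_of_nonneg (by nlinarith)] at h
          exact h
        rw [div_eq_inv_mul]
        have : κ^2 + 2*κ*τ - τ^2 = κ*(κ+τ) - τ*(τ-κ) := by ring
        rw [this]
        exact mul_le_mul_of_nonneg_left hlb (by positivity)
      have hQ : (κ^2 + τ^2)/c ≤ ‖κ • u - τ • v‖ := by
        rw [hid2, norm_smul, Real.norm_eq_abs, abs_of_pos (by positivity)]
        have hlb : τ*(κ+τ) - κ*(τ-κ) ≤ ‖(τ*(κ+τ)) • y₁ - (κ*(τ-κ)) • x₁‖ := by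
          have h := norm_sub_norm_le ((τ*(κ+τ)) • y₁) ((κ*(τ-κ)) • x₁)
          rw [norm_smul, norm_smul, hx₁, hy₁, mul_one, mul_one, Real.norm_eq_abs,
            Real.norm_eq_abs, abs_of_pos (by positivity),
            abs_of_nonneg (by nlinarith)] at h
          exact h
        rw [div_eq_inv_mul]
        have : κ^2 + τ^2 = τ*(κ+τ) - κ*(τ-κ) := by ring
        rw [this]
        exact mul_le_mul_of_nonneg_left hlb (by positivity)
      have hPQ : ((κ^2 + 2*κ*τ - τ^2)/c) * ((κ^2 + τ^2)/c) ≤ (T1 X κ τ)^2 := by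
        have hPnn : (0:ℝ) ≤ (κ^2 + 2*κ*τ - τ^2)/c := by
          apply div_nonneg _ hc0.le; nlinarith
        have hQnn : (0:ℝ) ≤ (κ^2 + τ^2)/c := by positivity
        calc ((κ^2 + 2*κ*τ - τ^2)/c) * ((κ^2 + τ^2)/c)
            ≤ ‖κ • u + τ • v‖ * ‖κ • u - τ • v‖ :=
              mul_le_mul hP hQ hQnn (norm_nonneg _)
          _ ≤ (T1 X κ τ)^2 := mul_le_T1_sq κ τ hun hvn
      -- combine with c² ≤ T1²
      have hcsq : c^2 ≤ (T1 X κ τ)^2 := by nlinarith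
      have hE : 4*κ^4 ≤ (κ^2 + 2*κ*τ - τ^2) * (κ^2 + τ^2) := by
        nlinarith [mul_nonneg (mul_nonneg (sub_nonneg.mpr hκτ) (by linarith : (0:ℝ) ≤ 2*κ - τ))
          (by positivity : (0:ℝ) ≤ τ^2 + κ*τ + κ^2),
          mul_nonneg (sub_nonneg.mpr hκτ) (by positivity : (0:ℝ) ≤ κ^3)]
      have hT4 : 4*κ^4 ≤ ((T1 X κ τ)^2)^2 := by
        have hcc : c / c = 1 := div_self hc0.ne'
        have hfrac : ((κ^2 + 2*κ*τ - τ^2)/c) * ((κ^2 + τ^2)/c) * c^2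
            = (κ^2 + 2*κ*τ - τ^2) * (κ^2 + τ^2) := by
          calc ((κ^2 + 2*κ*τ - τ^2)/c) * ((κ^2 + τ^2)/c) * c^2
              = (κ^2 + 2*κ*τ - τ^2) * (κ^2 + τ^2) * (c/c) * (c/c) := by ring
            _ = (κ^2 + 2*κ*τ - τ^2) * (κ^2 + τ^2) := by rw [hcc]; ring
        have hmul := mul_le_mul hPQ hcsq (sq_nonneg c) (sq_nonneg (T1 X κ τ))
        rw [hfrac] at hmul
        calc 4*κ^4 ≤ (κ^2 + 2*κ*τ - τ^2) * (κ^2 + τ^2) := hE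
          _ ≤ (T1 X κ τ)^2 * (T1 X κ τ)^2 := hmul
          _ = ((T1 X κ τ)^2)^2 := by ring
      nlinarith [hT4, sq_nonneg (T1 X κ τ)]
    -- per-pair estimate : κ² ‖x+y‖ ‖x−y‖ ≤ T1²
    have hmain : ∀ x y : X, ‖x‖ = 1 → ‖y‖ = 1 →
        κ^2 * (‖x + y‖ * ‖x - y‖) ≤ (T1 X κ τ)^2 := by
      intro x y hx hy
      set A : ℝ := ‖x + y‖ with hA
      set B : ℝ := ‖x - y‖ with hB
      have hA0 : 0 ≤ A := norm_nonneg _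
      have hB0 : 0 ≤ B := norm_nonneg _
      have hA2 : A ≤ 2 := by
        have := norm_add_le x y; rw [hx, hy] at this; linarith
      have hB2 : B ≤ 2 := by
        have := norm_sub_le x y; rw [hx, hy] at this; linarith
      by_cases h2κ : τ ≤ 2*κ
      · by_cases hAB1 : 1 ≤ A ∧ 1 ≤ B
        · obtain ⟨hA1, hB1⟩ := hAB1
          have hidP : κ • x + τ • y = τ • (x + y) - (τ - κ) • x := by module
          have hidQ : κ • x - τ • y = κ • (x - y) - (τ - κ) • y := by module
          have hP : κ * A ≤ ‖κ • x + τ • y‖ := by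
            rw [hidP]
            have h := norm_sub_norm_le (τ • (x + y)) ((τ - κ) • x)
            rw [norm_smul, norm_smul, hx, mul_one, Real.norm_eq_abs, Real.norm_eq_abs,
              abs_of_pos hτ, abs_of_nonneg (by linarith)] at h
            have : κ * A ≤ τ * ‖x + y‖ - (τ - κ) := by
              rw [← hA]; nlinarith
            linarith
          have hQ : κ * B ≤ ‖κ • x - τ • y‖ := by
            have hidQ' : κ • x - τ • y = τ • (x - y) - (τ - κ) • x := by module
            rw [hidQ']
            have h := norm_sub_norm_le (τ • (x - y)) ((τ - κ) • x)
            rw [norm_smul, norm_smul, hx, mul_one, Real.norm_eq_abs, Real.norm_eq_abs,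
              abs_of_pos hτ, abs_of_nonneg (by linarith)] at h
            have : κ * B ≤ τ * ‖x - y‖ - (τ - κ) := by
              rw [← hB]; nlinarith
            linarith
          have hP0 : (0:ℝ) ≤ κ * A := mul_nonneg hκ.le hA0
          have hQ0 : (0:ℝ) ≤ κ * B := mul_nonneg hκ.le hB0
          calc κ^2 * (A * B) = (κ * A) * (κ * B) := by ring
            _ ≤ ‖κ • x + τ • y‖ * ‖κ • x - τ • y‖ :=
                mul_le_mul hP hQ hQ0 (le_trans hP0 hP)
            _ ≤ (T1 X κ τ)^2 := mul_le_T1_sq κ τ hx hy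
        · -- min(A,B) < 1 : then A*B ≤ 2 and we use Fact 4
          have hABlt : A * B ≤ 2 := by
            rcases not_and_or.mp hAB1 with h | h
            · push_neg at h
              have : A * B ≤ 1 * 2 := mul_le_mul h.le hB2 hB0 zero_le_one
              linarith
            · push_neg at h
              have : A * B ≤ 2 * 1 := mul_le_mul hA2 h.le hB0 (by norm_num)
              linarith
          have h4 := hfact4 h2κ
          have : κ^2 * (A*B) ≤ κ^2 * 2 := mul_le_mul_of_nonneg_left hABlt (sq_nonneg κ)
          linarith
      · -- τ > 2κ : use T1 ≥ τ and A*B ≤ 4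
        push_neg at h2κ
        have hT1τ : τ ≤ T1 X κ τ := le_trans hcτ hcT1
        have h4 : A * B ≤ 2 * 2 := mul_le_mul hA2 hB2 hB0 (by norm_num)
        have h5 : κ^2 * (A*B) ≤ κ^2 * 4 := mul_le_mul_of_nonneg_left (by linarith) (sq_nonneg κ)
        have h6 : (2*κ)^2 ≤ τ^2 := by nlinarith
        have h7 : τ^2 ≤ (T1 X κ τ)^2 := by nlinarith
        nlinarith [h5, h6, h7]
    -- conclude via sSup_le
    have hTle : Tconst X ≤ T1 X κ τ / κ := by
      unfold Tconst
      apply Real.sSup_le _ (div_nonneg hT1pos.le hκ.le)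
      rintro r ⟨x, y, hx, hy, rfl⟩
      rw [le_div_iff₀ hκ, mul_comm]
      have h := hmain x y hx hy
      have hrw : κ * Real.sqrt (‖x + y‖ * ‖x - y‖)
          = Real.sqrt (κ^2 * (‖x + y‖ * ‖x - y‖)) := by
        rw [Real.sqrt_mul (sq_nonneg κ) (‖x + y‖ * ‖x - y‖), Real.sqrt_sq hκ.le]
      rw [hrw]
      calc Real.sqrt (κ^2 * (‖x + y‖ * ‖x - y‖)) ≤ Real.sqrt ((T1 X κ τ)^2) :=
            Real.sqrt_le_sqrt h
        _ = T1 X κ τ := Real.sqrt_sq hT1pos.le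
    calc κ * Tconst X ≤ κ * (T1 X κ τ / κ) :=
          mul_le_mul_of_nonneg_left hTle hκ.le
      _ = T1 X κ τ := by field_simp
  · -- upper bound : T1 X κ τ ≤ τ * Tconst X
    unfold T1
    apply Real.sSup_le _ (mul_nonneg hτ.le hT0)
    rintro r ⟨x, y, hx, hy, rfl⟩
    have hprod := upper_pair hκ hτ hκτ hTsq2 hx hy (mul_le_Tconst_sq hx hy)
    calc Real.sqrt (‖κ • x + τ • y‖ * ‖κ • x - τ • y‖) ≤ Real.sqrt ((τ * Tconst X)^2) :=
          Real.sqrt_le_sqrt hprod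
      _ = τ * Tconst X := Real.sqrt_sq (mul_nonneg hτ.le hT0)

private lemma T1_symm (κ τ : ℝ) : T1 X κ τ = T1 X τ κ := by
  unfold T1
  congr 1
  ext r
  constructor
  · rintro ⟨x, y, hx, hy, rfl⟩
    exact ⟨y, x, hy, hx, by rw [add_comm (κ • x), norm_sub_rev (κ • x)]⟩
  · rintro ⟨x, y, hx, hy, rfl⟩
    exact ⟨y, x, hy, hx, by rw [add_comm (τ • x), norm_sub_rev (τ • x)]⟩

end Aux

/-- For a real Banach space `X` with `dim X ≥ 2` and `κ, τ > 0`,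
`min(κ,τ) T(X) ≤ T₁(κ,τ,X) ≤ max(κ,τ) T(X)`. -/
theorem stmt6 {X : Type*} [NormedAddCommGroup X] [NormedSpace ℝ X] [CompleteSpace X]
    (hdim : 2 ≤ Module.rank ℝ X) (κ τ : ℝ) (hκ : 0 < κ) (hτ : 0 < τ) :
    min κ τ * Tconst X ≤ T1 X κ τ ∧ T1 X κ τ ≤ max κ τ * Tconst X := by
  rcases le_total κ τ with h | h
  · obtain ⟨h1, h2⟩ := key hdim hκ hτ h
    rw [min_eq_left h, max_eq_right h]
    exact ⟨h1, h2⟩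
  · obtain ⟨h1, h2⟩ := key hdim hτ hκ h
    rw [min_eq_right h, max_eq_left h, T1_symm κ τ]
    exact ⟨h1, h2⟩
end

section
/- Let X be a real Banach space with dim X ≥ 2 and let κ, τ > 0. If T₁(κ,τ,X) < κ + τ, then X is uniformly non-square. -/
/-- `X` is uniformly non-square: there exists `δ ∈ (0,1)` with
`min(‖x+y‖/2, ‖x−y‖/2) ≤ 1 − δ` for all `x, y` in the unit sphere. -/
def UniformlyNonSquare (X : Type*) [NormedAddCommGroup X] : Prop :=
  ∃ δ : ℝ, 0 < δ ∧ δ < 1 ∧ ∀ x y : X, ‖x‖ = 1 → ‖y‖ = 1 →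
    min (‖x + y‖ / 2) (‖x - y‖ / 2) ≤ 1 - δ

/-!
If `x, y ∈ S(X)` were almost square, i.e. both `‖x + y‖` and `‖x - y‖` were close to `2`, then
writing `κx ± τy = κ(x ± y) ∓ (κ - τ)y` (for `τ ≤ κ`) shows that both `‖κx + τy‖` and
`‖κx - τy‖` are close to `κ + τ`, so `T₁(κ,τ,X)` would be close to `κ + τ`.
-/

section

variable {X : Type*} [NormedAddCommGroup X] [NormedSpace ℝ X]

theorem norm_smul_add_smul_ge {x y : X} (hx : ‖x‖ ≤ 1) (hy : ‖y‖ ≤ 1) {κ τ : ℝ}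
    (hκ : 0 ≤ κ) (hτ : 0 ≤ τ) :
    κ + τ - max κ τ * (2 - ‖x + y‖) ≤ ‖κ • x + τ • y‖ := by
  rcases le_total τ κ with hτκ | hκτ
  · have hsplit : κ • x + τ • y = κ • (x + y) - (κ - τ) • y := by module
    have := norm_sub_norm_le (κ • (x + y)) ((κ - τ) • y)
    rw [← hsplit, norm_smul, norm_smul, Real.norm_of_nonneg hκ,
      Real.norm_of_nonneg (sub_nonneg.2 hτκ)] at this
    rw [max_eq_left hτκ]
    nlinarith
  · have hsplit : κ • x + τ • y = τ • (x + y) - (τ - κ) • x := by module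
    have := norm_sub_norm_le (τ • (x + y)) ((τ - κ) • x)
    rw [← hsplit, norm_smul, norm_smul, Real.norm_of_nonneg hτ,
      Real.norm_of_nonneg (sub_nonneg.2 hκτ)] at this
    rw [max_eq_right hκτ]
    nlinarith

theorem norm_smul_sub_smul_ge {x y : X} (hx : ‖x‖ ≤ 1) (hy : ‖y‖ ≤ 1) {κ τ : ℝ}
    (hκ : 0 ≤ κ) (hτ : 0 ≤ τ) :
    κ + τ - max κ τ * (2 - ‖x - y‖) ≤ ‖κ • x - τ • y‖ := by
  have := norm_smul_add_smul_ge hx (norm_neg y ▸ hy) hκ hτ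
  rwa [← sub_eq_add_neg, smul_neg, ← sub_eq_add_neg] at this

theorem T1_nonneg (κ τ : ℝ) : 0 ≤ T1 X κ τ :=
  Real.sSup_nonneg <| by
    rintro _ ⟨x, y, -, -, rfl⟩
    exact Real.sqrt_nonneg _

theorem sqrt_mul_norm_le_T1 {x y : X} (hx : ‖x‖ = 1) (hy : ‖y‖ = 1) (κ τ : ℝ) :
    Real.sqrt (‖κ • x + τ • y‖ * ‖κ • x - τ • y‖) ≤ T1 X κ τ := by
  refine le_csSup ⟨|κ| + |τ|, ?_⟩ ⟨x, y, hx, hy, rfl⟩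
  rintro _ ⟨x, y, hx, hy, rfl⟩
  have hadd : ‖κ • x + τ • y‖ ≤ |κ| + |τ| := by
    simpa [norm_smul, hx, hy] using norm_add_le (κ • x) (τ • y)
  have hsub : ‖κ • x - τ • y‖ ≤ |κ| + |τ| := by
    simpa [norm_smul, hx, hy] using norm_sub_le (κ • x) (τ • y)
  rw [Real.sqrt_le_left (by positivity), sq]
  exact mul_le_mul hadd hsub (norm_nonneg _) (by positivity)

end

theorem stmt7_general {X : Type*} [NormedAddCommGroup X] [NormedSpace ℝ X]
    (κ τ : ℝ) (hκ : 0 < κ) (hτ : 0 < τ)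
    (h : T1 X κ τ < κ + τ) :
    UniformlyNonSquare X := by
  set m := max κ τ
  have hm : 0 < m := lt_max_of_lt_left hκ
  have hmκτ : κ + τ ≤ 2 * m := by linarith [le_max_left κ τ, le_max_right κ τ]
  -- `δ` is chosen so that `κ + τ - 2mδ` still lies above `T₁(κ,τ,X)`.
  set δ := (κ + τ - T1 X κ τ) / (4 * m)
  have hδ : 4 * m * δ = κ + τ - T1 X κ τ := mul_div_cancel₀ _ (by positivity)
  have hT1 := T1_nonneg (X := X) κ τ
  refine ⟨δ, div_pos (by linarith) (by positivity), by nlinarith, fun x y hx hy => ?_⟩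
  by_contra! hsquare
  obtain ⟨hplus, hminus⟩ := lt_min_iff.mp hsquare
  have hadd := norm_smul_add_smul_ge hx.le hy.le hκ.le hτ.le
  have hsub := norm_smul_sub_smul_ge hx.le hy.le hκ.le hτ.le
  have hadd' : T1 X κ τ + 2 * m * δ < ‖κ • x + τ • y‖ := by nlinarith
  have hsub' : T1 X κ τ + 2 * m * δ < ‖κ • x - τ • y‖ := by nlinarith
  have hT1_lt : T1 X κ τ < Real.sqrt (‖κ • x + τ • y‖ * ‖κ • x - τ • y‖) := by
    rw [Real.lt_sqrt hT1, sq]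
    exact mul_lt_mul'' (by linarith) (by linarith) hT1 hT1
  exact (sqrt_mul_norm_le_T1 hx hy κ τ).not_gt hT1_lt

/-- If `T₁(κ,τ,X) < κ + τ` for a real Banach space `X` with `dim X ≥ 2`,
then `X` is uniformly non-square. -/
theorem stmt7 {X : Type*} [NormedAddCommGroup X] [NormedSpace ℝ X] [CompleteSpace X]
    (hdim : 2 ≤ Module.rank ℝ X) (κ τ : ℝ) (hκ : 0 < κ) (hτ : 0 < τ)
    (h : T1 X κ τ < κ + τ) :
    UniformlyNonSquare X :=
  stmt7_general κ τ hκ hτ h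
end

section
/- Let ℓ₁ denote the real Banach space of absolutely summable sequences x = (x_n) with the norm ‖x‖₁ = Σ|x_n|. Then for all κ, τ > 0, T₂(κ,τ,ℓ₁) = κ + τ. -/
/-- The skew constant `T₂(κ,τ,X) = sup{ (‖κx + τy‖ ‖τx − κy‖)^{1/2} : x, y ∈ S(X) }`. -/
noncomputable def T2 (X : Type*) [NormedAddCommGroup X] [Module ℝ X] (κ τ : ℝ) : ℝ :=
  sSup {r : ℝ | ∃ x y : X, ‖x‖ = 1 ∧ ‖y‖ = 1 ∧
    r = Real.sqrt (‖κ • x + τ • y‖ * ‖τ • x - κ • y‖)}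

/-! The triangle inequality bounds both `‖κx + τy‖` and `‖τx − κy‖` by `|κ| + |τ|` in every normed
space. In `ℓ₁` the bound is attained by the first two unit vectors `e₀, e₁`, since the `ℓ₁`-norm
of `a e₀ + b e₁` is `|a| + |b|`. -/

theorem lp.norm_single_add_single_of_ne {ι : Type*} [DecidableEq ι] {E : ι → Type*}
    [∀ i, NormedAddCommGroup (E i)] {i j : ι} (hij : i ≠ j) (a : E i) (b : E j) :
    ‖lp.single 1 i a + lp.single 1 j b‖ = ‖a‖ + ‖b‖ := by
  set f : ∀ k, E k := Pi.single i a + Pi.single j b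
  have hfi : f i = a := by simp [f, Pi.single_eq_of_ne hij]
  have hfj : f j = b := by simp [f, Pi.single_eq_of_ne hij.symm]
  simpa [Finset.sum_pair hij, hfi, hfj] using lp.norm_sum_single (p := 1) (by simp) f {i, j}

section SkewConstant

variable {X : Type*} [NormedAddCommGroup X] [NormedSpace ℝ X] {x y : X}

theorem norm_smul_add_smul_le (hx : ‖x‖ = 1) (hy : ‖y‖ = 1) (a b : ℝ) :
    ‖a • x + b • y‖ ≤ |a| + |b| := by
  simpa [norm_smul, hx, hy] using norm_add_le (a • x) (b • y)

theorem sqrt_norm_mul_norm_le (hx : ‖x‖ = 1) (hy : ‖y‖ = 1) (κ τ : ℝ) :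
    √(‖κ • x + τ • y‖ * ‖τ • x - κ • y‖) ≤ |κ| + |τ| := by
  have h₁ := norm_smul_add_smul_le hx hy κ τ
  have h₂ : ‖τ • x - κ • y‖ ≤ |κ| + |τ| := by
    simpa [sub_eq_add_neg, add_comm] using norm_smul_add_smul_le hx hy τ (-κ)
  calc √(‖κ • x + τ • y‖ * ‖τ • x - κ • y‖) ≤ √((|κ| + |τ|) * (|κ| + |τ|)) := by gcongr
    _ = |κ| + |τ| := Real.sqrt_mul_self (by positivity)

theorem T2_le (κ τ : ℝ) : T2 X κ τ ≤ |κ| + |τ| :=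
  Real.sSup_le (by rintro _ ⟨x, y, hx, hy, rfl⟩; exact sqrt_norm_mul_norm_le hx hy κ τ)
    (by positivity)

theorem sqrt_norm_mul_norm_le_T2 (hx : ‖x‖ = 1) (hy : ‖y‖ = 1) (κ τ : ℝ) :
    √(‖κ • x + τ • y‖ * ‖τ • x - κ • y‖) ≤ T2 X κ τ :=
  le_csSup ⟨|κ| + |τ|, by rintro _ ⟨x, y, hx, hy, rfl⟩; exact sqrt_norm_mul_norm_le hx hy κ τ⟩
    ⟨x, y, hx, hy, rfl⟩

end SkewConstant

/-- For the space `ℓ₁` of absolutely summable real sequences and all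
`κ, τ > 0`, `T₂(κ,τ,ℓ₁) = κ + τ`. -/
theorem stmt11 (κ τ : ℝ) (hκ : 0 < κ) (hτ : 0 < τ) :
    T2 (lp (fun _ : ℕ => ℝ) 1) κ τ = κ + τ := by
  set e : ℕ → lp (fun _ : ℕ => ℝ) 1 := fun n => lp.single 1 n 1
  have he : ∀ n, ‖e n‖ = 1 := fun n => by simp [e, lp.norm_single]
  have hnorm : ∀ a b : ℝ, ‖a • e 0 + b • e 1‖ = |a| + |b| := fun a b => by
    simp [e, ← lp.single_smul, lp.norm_single_add_single_of_ne zero_ne_one]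
  refine le_antisymm ?_ ?_
  · simpa [abs_of_pos hκ, abs_of_pos hτ] using T2_le (X := lp (fun _ : ℕ => ℝ) 1) κ τ
  · have := sqrt_norm_mul_norm_le_T2 (he 0) (he 1) κ τ
    rwa [sub_eq_add_neg, ← neg_smul, hnorm, hnorm, abs_neg, abs_of_pos hκ, abs_of_pos hτ,
      add_comm τ, Real.sqrt_mul_self (by positivity)] at this
end
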